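/- For every 1 ≤ k < l ≤ n and every pair of indices i, j with 1 ≤ i, j ≤ l, the polynomial identity Δ'_{l;l−k}·{x_{ij}, Δ_{l;k}} = Δ_{l;k}·{x_{ij}, Δ'_{l;l−k}} holds in R_n (equivalently, {x_{ij}, Δ_{l;k}/Δ'_{l;l−k}} = 0 in the fraction field). -/

import Mathlib

open MvPolynomial

/-- The quadratic Poisson bracket on the polynomial algebra of the matrix affine
Poisson space `M_{m,n}`. -/
noncomputable def pois {m n : ℕ} (f g : MvPolynomial (Fin m × Fin n) ℂ) :
    MvPolynomial (Fin m × Fin n) ℂ :=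
  ∑ i : Fin m, ∑ k : Fin m, ∑ j : Fin n, ∑ l : Fin n,
    (((k : ℤ) - (i : ℤ)).sign + ((l : ℤ) - (j : ℤ)).sign) •
      (X (i, l) * X (k, j) * pderiv (i, j) f * pderiv (k, l) g)

/-- The minor `Δ_{I,J}` (equal to `0` by convention if `|I| ≠ |J|`). -/
noncomputable def Delta {m n : ℕ} (I : Finset (Fin m)) (J : Finset (Fin n)) :
    MvPolynomial (Fin m × Fin n) ℂ :=
  if h : J.card = I.card then
    Matrix.det (Matrix.of fun a b : Fin I.card =>
      X ((I.orderIsoOfFin rfl a).1, (J.orderIsoOfFin h b).1))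
  else 0

/-- The coordinate ring `R_n = ℂ[x_{ij}]` of `M_n`. -/
abbrev Rn (n : ℕ) := MvPolynomial (Fin n × Fin n) ℂ

/-- The field of rational functions `F_n = ℂ(M_n)`. -/
abbrev Fn (n : ℕ) := FractionRing (Rn n)

/-- The interval `[a,b]` (in 1-based indexing) inside `{1,…,n}`, as a finset of `Fin n`. -/
def iv (n a b : ℕ) : Finset (Fin n) :=
  Finset.univ.filter fun i => a ≤ (i : ℕ) + 1 ∧ (i : ℕ) + 1 ≤ b

/-- `Δ_{l;k}`: the upper-right `k×k` minor of the principal `l×l` submatrix. -/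
noncomputable def Dul (n l k : ℕ) : Rn n := Delta (iv n 1 k) (iv n (l - k + 1) l)

/-- `Δ'_{l;k}`: the lower-left `k×k` minor of the principal `l×l` submatrix. -/
noncomputable def Dll (n l k : ℕ) : Rn n := Delta (iv n (l - k + 1) l) (iv n 1 k)

/-- `Δ_l`: the principal `l×l` minor. -/
noncomputable def Dpr (n l : ℕ) : Rn n := Delta (iv n 1 l) (iv n 1 l)

/-- The extension of the quadratic Poisson bracket to the field of rational functions,
determined by `{P/Q, S/T} = ({P,S}QT − {P,T}QS − {Q,S}PT + {Q,T}PS)/(Q²T²)`. -/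
noncomputable def poisF (n : ℕ) (f g : Fn n) : Fn n :=
  let φ := algebraMap (Rn n) (Fn n)
  let P := (IsLocalization.sec (nonZeroDivisors (Rn n)) f).1
  let Q := ((IsLocalization.sec (nonZeroDivisors (Rn n)) f).2 : Rn n)
  let S := (IsLocalization.sec (nonZeroDivisors (Rn n)) g).1
  let T := ((IsLocalization.sec (nonZeroDivisors (Rn n)) g).2 : Rn n)
  (φ (pois P S) * φ Q * φ T - φ (pois P T) * φ Q * φ S
    - φ (pois Q S) * φ P * φ T + φ (pois Q T) * φ P * φ S)
    / (φ Q ^ 2 * φ T ^ 2)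

/-!
`{x_ij, -}` is a derivation, so on a minor `Δ_{I,J}` it is computed column by column
(Jacobi's formula). Since `{x_ij, x_ab} = (sign(a-i) + sign(b-j)) x_ib x_aj`, the result splits
into a row part, weighted by `sign(a-i)` for `a ∈ I`, and a column part, weighted by
`sign(b-j)` for `b ∈ J`; Cramer's rule evaluates both. The row part vanishes when `i ∈ I` and
equals `s Δ x_ij` when `j ∈ J` and every row of `I` lies on side `s` of `i` (dually for
columns), and the two parts cancel when `I` and `J` lie on opposite sides of `i` and `j`.
For `(i, j)` in the principal `l × l` block, each of the four positions of `(i, j)` relative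
to the blocks `[1,k] × [l-k+1,l]` of `Δ_{l;k}` and `[k+1,l] × [1,l-k]` of `Δ'_{l;l-k}` gives
`{x_ij, Δ} = ε x_ij Δ` for both minors with the same `ε ∈ {1, 0, -1}`.
-/

namespace Derivation

variable {R A M : Type*} [CommSemiring R] [CommSemiring A] [AddCommMonoid M] [Algebra R A]
  [Module A M] [Module R M]

theorem map_finset_prod (D : Derivation R A M) {ι : Type*} [DecidableEq ι] (s : Finset ι)
    (f : ι → A) :
    D (∏ a ∈ s, f a) = ∑ a ∈ s, (∏ b ∈ s.erase a, f b) • D (f a) := by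
  induction s using Finset.induction_on with
  | empty => simp
  | insert a s ha ih =>
    rw [Finset.prod_insert ha, leibniz, ih, Finset.sum_insert ha, Finset.erase_insert ha,
      Finset.smul_sum, add_comm]
    congr 1
    refine Finset.sum_congr rfl fun b hb => ?_
    rw [Finset.erase_insert_of_ne (ne_of_mem_of_not_mem hb ha).symm, Finset.prod_insert
      (fun h => ha (Finset.mem_of_mem_erase h)), smul_smul]

end Derivation

theorem Derivation.map_det {R A : Type*} [CommSemiring R] [CommRing A] [Algebra R A]
    {ι : Type*} [Fintype ι] [DecidableEq ι] (D : Derivation R A A) (M : Matrix ι ι A) :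
    D M.det = ∑ p, (M.updateCol p fun q => D (M q p)).det := by
  simp only [Matrix.det_apply, map_sum, Units.smul_def, map_zsmul, D.map_finset_prod,
    Finset.smul_sum]
  rw [Finset.sum_comm]
  refine Finset.sum_congr rfl fun p _ => Finset.sum_congr rfl fun σ _ => ?_
  rw [← Finset.mul_prod_erase _ _ (Finset.mem_univ p), smul_eq_mul, mul_comm]
  congr 2
  · simp
  · refine Finset.prod_congr rfl fun q hq => ?_
    rw [Matrix.updateCol_ne (Finset.ne_of_mem_erase hq)]

namespace Matrix

variable {R ι : Type*} [CommRing R] [Fintype ι] [DecidableEq ι] (M : Matrix ι ι R)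

theorem sum_mul_det_updateCol_eq_sum_mul_det_updateRow (u v : ι → R) :
    ∑ p, u p * (M.updateCol p v).det = ∑ q, v q * (M.updateRow q u).det := by
  have hcol : ∑ p, u p * (M.updateCol p v).det = u ⬝ᵥ (M.adjugate *ᵥ v) := by
    simp_rw [← cramer_apply, ← cramer_eq_adjugate_mulVec]; rfl
  have hrow : ∑ q, v q * (M.updateRow q u).det = v ⬝ᵥ (Mᵀ.adjugate *ᵥ u) := by
    simp_rw [← cramer_transpose_apply, ← cramer_eq_adjugate_mulVec]; rfl
  rw [hcol, hrow, ← adjugate_transpose, dotProduct_mulVec, ← mulVec_transpose, dotProduct_comm]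

theorem sum_mul_det_updateCol (v : ι → R) (q₀ : ι) :
    ∑ p, M q₀ p * (M.updateCol p v).det = M.det * v q₀ := by
  simpa [mulVec, dotProduct, cramer_apply] using congrFun (mulVec_cramer M v) q₀

theorem sum_mul_det_updateRow (u : ι → R) (p₀ : ι) :
    ∑ q, M q p₀ * (M.updateRow q u).det = M.det * u p₀ := by
  simpa [updateCol_transpose] using sum_mul_det_updateCol Mᵀ u p₀

end Matrix

section Bracket

variable {m n : ℕ}

noncomputable def poisDerivation (f : MvPolynomial (Fin m × Fin n) ℂ) :
    Derivation ℂ (MvPolynomial (Fin m × Fin n) ℂ) (MvPolynomial (Fin m × Fin n) ℂ) :=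
  ∑ i : Fin m, ∑ k : Fin m, ∑ j : Fin n, ∑ l : Fin n,
    ((((k : ℤ) - (i : ℤ)).sign + ((l : ℤ) - (j : ℤ)).sign) •
      (X (i, l) * X (k, j) * pderiv (i, j) f)) • pderiv (k, l)

theorem poisDerivation_apply (f g : MvPolynomial (Fin m × Fin n) ℂ) :
    poisDerivation f g = pois f g := by
  rw [poisDerivation, ← Derivation.coeFnAddMonoidHom_apply]
  simp only [map_sum, Finset.sum_apply, Derivation.coeFnAddMonoidHom_apply,
    Derivation.smul_apply, smul_eq_mul, pois, smul_mul_assoc]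

theorem pois_X_X (i a : Fin m) (j b : Fin n) :
    pois (X (i, j)) (X (a, b) : MvPolynomial (Fin m × Fin n) ℂ)
      = (((a : ℤ) - i).sign + ((b : ℤ) - j).sign) • (X (i, b) * X (a, j)) := by
  simp [pois, pderiv_X, Pi.single_apply, ite_and, Finset.sum_ite_eq, Finset.sum_ite_irrel]

end Bracket

section Minor

variable {m n : ℕ} {ι : Type*} [Fintype ι] [DecidableEq ι]
  (i : Fin m) (j : Fin n) (r : ι → Fin m) (c : ι → Fin n)

noncomputable abbrev varMatrix : Matrix ι ι (MvPolynomial (Fin m × Fin n) ℂ) :=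
  Matrix.of fun a b => X (r a, c b)

noncomputable def rowTerm : MvPolynomial (Fin m × Fin n) ℂ :=
  ∑ q, ((r q : ℤ) - i).sign •
    (X (r q, j) * ((varMatrix r c).updateRow q fun p => X (i, c p)).det)

noncomputable def colTerm : MvPolynomial (Fin m × Fin n) ℂ :=
  ∑ p, ((c p : ℤ) - j).sign •
    (X (i, c p) * ((varMatrix r c).updateCol p fun q => X (r q, j)).det)

theorem pois_X_det_varMatrix :
    pois (X (i, j)) (varMatrix r c).det = rowTerm i j r c + colTerm i j r c := by
  rw [← poisDerivation_apply, Derivation.map_det]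
  simp only [poisDerivation_apply, Matrix.of_apply, pois_X_X]
  have hsplit : ∀ p, (fun q => (((r q : ℤ) - i).sign + ((c p : ℤ) - j).sign) •
        (X (i, c p) * X (r q, j) : MvPolynomial (Fin m × Fin n) ℂ))
      = (X (i, c p) : MvPolynomial (Fin m × Fin n) ℂ) •
          (fun q => ((r q : ℤ) - i).sign • X (r q, j))
        + (((c p : ℤ) - j).sign • X (i, c p) : MvPolynomial (Fin m × Fin n) ℂ) •
          fun q => X (r q, j) := by
    intro p
    funext q
    simp only [Pi.add_apply, Pi.smul_apply, smul_eq_mul, add_smul, zsmul_eq_mul]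
    ring
  simp only [hsplit, Matrix.det_updateCol_add, Matrix.det_updateCol_smul, Finset.sum_add_distrib]
  rw [Matrix.sum_mul_det_updateCol_eq_sum_mul_det_updateRow]
  simp only [rowTerm, colTerm, smul_mul_assoc]

end Minor

section Terms

variable {m n : ℕ} {ι : Type*} [Fintype ι] [DecidableEq ι]
  {i : Fin m} {j : Fin n} {r : ι → Fin m} {c : ι → Fin n}

theorem rowTerm_eq_zero {q₀ : ι} (hq₀ : r q₀ = i) : rowTerm i j r c = 0 := by
  refine Finset.sum_eq_zero fun q _ => ?_
  obtain rfl | hq := eq_or_ne q q₀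
  · simp [hq₀]
  · have hrows : (varMatrix r c).updateRow q (fun p => X (i, c p)) q
        = (varMatrix r c).updateRow q (fun p => X (i, c p)) q₀ := by
      funext p
      simp [Matrix.updateRow_ne hq.symm, ← hq₀]
    rw [Matrix.det_zero_of_row_eq hq hrows, mul_zero, smul_zero]

theorem colTerm_eq_zero {p₀ : ι} (hp₀ : c p₀ = j) : colTerm i j r c = 0 := by
  refine Finset.sum_eq_zero fun p _ => ?_
  obtain rfl | hp := eq_or_ne p p₀
  · simp [hp₀]
  · have hcols : ∀ a, (varMatrix r c).updateCol p (fun q => X (r q, j)) a p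
        = (varMatrix r c).updateCol p (fun q => X (r q, j)) a p₀ := by
      simp [Matrix.updateCol_ne hp.symm, ← hp₀]
    rw [Matrix.det_zero_of_column_eq hp hcols, mul_zero, smul_zero]

theorem rowTerm_eq_smul {p₀ : ι} (hp₀ : c p₀ = j) {s : ℤ}
    (hs : ∀ q, ((r q : ℤ) - i).sign = s) :
    rowTerm i j r c = s • ((varMatrix r c).det * X (i, j)) := by
  simp only [rowTerm, hs, ← Finset.smul_sum]
  congr 1
  simpa [hp₀] using Matrix.sum_mul_det_updateRow (varMatrix r c) (fun p => X (i, c p)) p₀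

theorem colTerm_eq_smul {q₀ : ι} (hq₀ : r q₀ = i) {s : ℤ}
    (hs : ∀ p, ((c p : ℤ) - j).sign = s) :
    colTerm i j r c = s • ((varMatrix r c).det * X (i, j)) := by
  simp only [colTerm, hs, ← Finset.smul_sum]
  congr 1
  simpa [hq₀] using Matrix.sum_mul_det_updateCol (varMatrix r c) (fun q => X (r q, j)) q₀

theorem rowTerm_add_colTerm_eq_zero {s : ℤ} (hr : ∀ q, ((r q : ℤ) - i).sign = s)
    (hc : ∀ p, ((c p : ℤ) - j).sign = -s) : rowTerm i j r c + colTerm i j r c = 0 := by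
  simp only [rowTerm, colTerm, hr, hc, ← Finset.smul_sum]
  rw [Matrix.sum_mul_det_updateCol_eq_sum_mul_det_updateRow, neg_smul, add_neg_cancel]

end Terms

section Delta

variable {m n : ℕ} {I : Finset (Fin m)} {J : Finset (Fin n)} {i : Fin m} {j : Fin n}

theorem Delta_eq_zero_or_exists_eq_det_varMatrix :
    Delta I J = 0 ∨ ∃ (p : ℕ) (r : Fin p → Fin m) (c : Fin p → Fin n),
      Set.range r = I ∧ Set.range c = J ∧ Delta I J = (varMatrix r c).det := by
  unfold Delta
  split_ifs with h
  · exact .inr ⟨_, I.orderEmbOfFin rfl, J.orderEmbOfFin h, I.range_orderEmbOfFin rfl,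
      J.range_orderEmbOfFin h, rfl⟩
  · exact .inl rfl

theorem pois_X_Delta_eq_zero_of_mem_of_mem (hi : i ∈ I) (hj : j ∈ J) :
    pois (X (i, j)) (Delta I J) = 0 := by
  obtain h | ⟨p, r, c, hr, hc, h⟩ := Delta_eq_zero_or_exists_eq_det_varMatrix (I := I) (J := J)
  · simp [h, pois]
  obtain ⟨q₀, hq₀⟩ : i ∈ Set.range r := hr ▸ hi
  obtain ⟨p₀, hp₀⟩ : j ∈ Set.range c := hc ▸ hj
  rw [h, pois_X_det_varMatrix, rowTerm_eq_zero hq₀, colTerm_eq_zero hp₀, add_zero]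

theorem pois_X_Delta_of_mem_rows {s : ℤ} (hi : i ∈ I)
    (hJ : ∀ b ∈ J, ((b : ℤ) - j).sign = s) :
    pois (X (i, j)) (Delta I J) = s • (Delta I J * X (i, j)) := by
  obtain h | ⟨p, r, c, hr, hc, h⟩ := Delta_eq_zero_or_exists_eq_det_varMatrix (I := I) (J := J)
  · simp [h, pois]
  obtain ⟨q₀, hq₀⟩ : i ∈ Set.range r := hr ▸ hi
  rw [h, pois_X_det_varMatrix, rowTerm_eq_zero hq₀,
    colTerm_eq_smul hq₀ fun p => hJ _ (hc.le (Set.mem_range_self p)), zero_add]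

theorem pois_X_Delta_of_mem_cols {s : ℤ} (hj : j ∈ J)
    (hI : ∀ a ∈ I, ((a : ℤ) - i).sign = s) :
    pois (X (i, j)) (Delta I J) = s • (Delta I J * X (i, j)) := by
  obtain h | ⟨p, r, c, hr, hc, h⟩ := Delta_eq_zero_or_exists_eq_det_varMatrix (I := I) (J := J)
  · simp [h, pois]
  obtain ⟨p₀, hp₀⟩ : j ∈ Set.range c := hc ▸ hj
  rw [h, pois_X_det_varMatrix, colTerm_eq_zero hp₀,
    rowTerm_eq_smul hp₀ fun q => hI _ (hr.le (Set.mem_range_self q)), add_zero]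

theorem pois_X_Delta_eq_zero_of_opposite_signs {s t : ℤ}
    (hI : ∀ a ∈ I, ((a : ℤ) - i).sign = s) (hJ : ∀ b ∈ J, ((b : ℤ) - j).sign = t)
    (hst : s + t = 0) :
    pois (X (i, j)) (Delta I J) = 0 := by
  obtain h | ⟨p, r, c, hr, hc, h⟩ := Delta_eq_zero_or_exists_eq_det_varMatrix (I := I) (J := J)
  · simp [h, pois]
  obtain rfl : t = -s := by omega
  rw [h, pois_X_det_varMatrix, rowTerm_add_colTerm_eq_zero
    (fun q => hI _ (hr.le (Set.mem_range_self q)))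
    (fun p => hJ _ (hc.le (Set.mem_range_self p)))]

end Delta

section Intervals

variable {n a b : ℕ} {x y : Fin n}

theorem mem_iv : x ∈ iv n a b ↔ a ≤ (x : ℕ) + 1 ∧ (x : ℕ) + 1 ≤ b := by
  simp [iv]

theorem sign_sub_eq_one_of_mem_iv (h : (y : ℕ) + 1 < a) (hx : x ∈ iv n a b) :
    ((x : ℤ) - y).sign = 1 := by
  rw [mem_iv] at hx
  exact Int.sign_eq_one_of_pos (by omega)

theorem sign_sub_eq_neg_one_of_mem_iv (h : b ≤ (y : ℕ)) (hx : x ∈ iv n a b) :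
    ((x : ℤ) - y).sign = -1 := by
  rw [mem_iv] at hx
  exact Int.sign_eq_neg_one_of_neg (by omega)

end Intervals

theorem exists_pois_X_Dul_eq_smul_and_Dll_eq_smul (n k l : ℕ) (i j : Fin n)
    (hi : (i : ℕ) + 1 ≤ l) (hj : (j : ℕ) + 1 ≤ l) :
    ∃ s : ℤ, pois (X (i, j)) (Dul n l k) = s • (Dul n l k * X (i, j)) ∧
      pois (X (i, j)) (Dll n l (l - k)) = s • (Dll n l (l - k) * X (i, j)) := by
  unfold Dul Dll
  rcases lt_or_ge (i : ℕ) k with hik | hik <;> rcases lt_or_ge (j : ℕ) (l - k) with hjl | hjl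
  · refine ⟨1, pois_X_Delta_of_mem_rows (mem_iv.2 (by omega)) fun _ ↦ ?_,
      pois_X_Delta_of_mem_cols (mem_iv.2 (by omega)) fun _ ↦ ?_⟩ <;>
      exact sign_sub_eq_one_of_mem_iv (by omega)
  · refine ⟨0, ?_, ?_⟩ <;> rw [zero_smul]
    · exact pois_X_Delta_eq_zero_of_mem_of_mem (mem_iv.2 (by omega)) (mem_iv.2 (by omega))
    · exact pois_X_Delta_eq_zero_of_opposite_signs (fun _ ↦ sign_sub_eq_one_of_mem_iv (by omega))
        (fun _ ↦ sign_sub_eq_neg_one_of_mem_iv hjl) (by norm_num)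
  · refine ⟨0, ?_, ?_⟩ <;> rw [zero_smul]
    · exact pois_X_Delta_eq_zero_of_opposite_signs (fun _ ↦ sign_sub_eq_neg_one_of_mem_iv hik)
        (fun _ ↦ sign_sub_eq_one_of_mem_iv (by omega)) (by norm_num)
    · exact pois_X_Delta_eq_zero_of_mem_of_mem (mem_iv.2 (by omega)) (mem_iv.2 (by omega))
  · exact ⟨-1,
      pois_X_Delta_of_mem_cols (mem_iv.2 (by omega)) fun _ ↦ sign_sub_eq_neg_one_of_mem_iv hik,
      pois_X_Delta_of_mem_rows (mem_iv.2 (by omega)) fun _ ↦ sign_sub_eq_neg_one_of_mem_iv hjl⟩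

theorem GZ_bracket_principal_block_general (n k l : ℕ)
    (i j : Fin n) (hi : (i : ℕ) + 1 ≤ l) (hj : (j : ℕ) + 1 ≤ l) :
    Dll n l (l - k) * pois (X (i, j)) (Dul n l k)
      = Dul n l k * pois (X (i, j)) (Dll n l (l - k)) := by
  obtain ⟨s, hDul, hDll⟩ := exists_pois_X_Dul_eq_smul_and_Dll_eq_smul n k l i j hi hj
  rw [hDul, hDll, mul_smul_comm, mul_smul_comm, mul_left_comm]

/-- **Case 1 of the Gelfand–Zeitlin flow computation:** for `i, j` in the principal
`l×l` block, `{x_{ij}, Δ_{l;k}/Δ'_{l;l−k}} = 0`, i.e. as a polynomial identity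
`Δ'_{l;l−k}·{x_{ij}, Δ_{l;k}} = Δ_{l;k}·{x_{ij}, Δ'_{l;l−k}}`. -/
theorem GZ_bracket_principal_block (n k l : ℕ) (hk : 1 ≤ k) (hkl : k < l) (hln : l ≤ n)
    (i j : Fin n) (hi : (i : ℕ) + 1 ≤ l) (hj : (j : ℕ) + 1 ≤ l) :
    Dll n l (l - k) * pois (X (i, j)) (Dul n l k)
      = Dul n l k * pois (X (i, j)) (Dll n l (l - k)) :=
  GZ_bracket_principal_block_general n k l i j hi hj
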